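/- For every n ≥ 1 and variables x_1,…,x_n (in a commutative ring), det_{0 ≤ i,j ≤ n−1}( h_{2j−i}(x_1, x_2, …, x_n) ) = ∏_{1 ≤ i < j ≤ n} (x_i + x_j), where h_m is the complete homogeneous symmetric polynomial of degree m in all n variables and h_m = 0 for m < 0. (This is the evaluation of the Schur polynomial of the staircase shape as a product, via the Jacobi–Trudi identity.) -/
import Mathlib

open Finset

/-- The complete homogeneous symmetric polynomial of degree `m` in the variables
`v 0, …, v (k-1)`: the sum of all weakly increasing degree-`m` monomials. -/
def hsym {R : Type*} [CommRing R] (m : ℕ) {k : ℕ} (v : Fin k → R) : R :=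
  ∑ f ∈ (Finset.univ : Finset (Fin m → Fin k)).filter
      (fun f => ∀ a b : Fin m, a ≤ b → f a ≤ f b),
    ∏ i, v (f i)

namespace Staircase

variable {R : Type*} [CommRing R]

def esym (s : ℕ) {k : ℕ} (v : Fin k → R) : R :=
  ∑ A ∈ Finset.powersetCard s (Finset.univ : Finset (Fin k)), ∏ i ∈ A, v i

lemma esym_zero {k : ℕ} (v : Fin k → R) : esym 0 v = 1 := by
  simp [esym]

lemma esym_gt {k s : ℕ} (v : Fin k → R) (h : k < s) : esym s v = 0 := by
  rw [esym, Finset.powersetCard_eq_empty.2 (by simpa using h), Finset.sum_empty]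

lemma esym_snoc {k : ℕ} (s : ℕ) (w : Fin k → R) (y : R) :
    esym (s + 1) (Fin.snoc w y) = esym (s + 1) w + y * esym s w := by
  classical
  have hnot : Fin.last k ∉ (Finset.univ : Finset (Fin k)).map Fin.castSuccEmb := by
    simp [Fin.castSuccEmb]
    intro a ha
    exact absurd ha (Fin.castSucc_lt_last a).ne
  rw [esym, Fin.univ_castSuccEmb, Finset.cons_eq_insert,
    Finset.powersetCard_succ_insert hnot]
  rw [Finset.sum_union]
  · congr 1
    · -- subsets avoiding last
      rw [Finset.powersetCard_map, Finset.sum_map, esym]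
      refine Finset.sum_congr rfl fun B _ => ?_
      rw [show ((Finset.mapEmbedding Fin.castSuccEmb).toEmbedding B : Finset (Fin (k+1)))
          = B.map Fin.castSuccEmb from rfl, Finset.prod_map]
      refine Finset.prod_congr rfl fun j _ => ?_
      exact Fin.snoc_castSucc (α := fun _ => R) (x := y) (p := w) (i := j)
    · -- subsets containing last
      rw [Finset.sum_image, esym, Finset.mul_sum]
      · rw [Finset.powersetCard_map, Finset.sum_map]
        refine Finset.sum_congr rfl fun B _ => ?_
        rw [show ((Finset.mapEmbedding Fin.castSuccEmb).toEmbedding B : Finset (Fin (k+1)))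
          = B.map Fin.castSuccEmb from rfl]
        have hlast : Fin.last k ∉ B.map Fin.castSuccEmb := by
          simp only [Finset.mem_map, Fin.castSuccEmb, not_exists]
          intro a
          rintro ⟨_, ha⟩
          exact absurd ha (Fin.castSucc_lt_last a).ne
        rw [Finset.prod_insert hlast, Fin.snoc_last, Finset.prod_map]
        congr 1
        refine Finset.prod_congr rfl fun j _ => ?_
        exact Fin.snoc_castSucc (α := fun _ => R) (x := y) (p := w) (i := j)
      · -- injectivity of insert last on sets avoiding last
        intro A hA B hB hAB
        have hA' : Fin.last k ∉ A := fun h =>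
          hnot ((Finset.mem_powersetCard.1 hA).1 h)
        have hB' : Fin.last k ∉ B := fun h =>
          hnot ((Finset.mem_powersetCard.1 hB).1 h)
        have := congrArg (Finset.erase · (Fin.last k)) hAB
        simpa [Finset.erase_insert hA', Finset.erase_insert hB'] using this
  · -- disjointness
    rw [Finset.disjoint_left]
    intro A hA hA'
    obtain ⟨B, _, rfl⟩ := Finset.mem_image.1 hA'
    exact hnot ((Finset.mem_powersetCard.1 hA).1 (Finset.mem_insert_self _ _))

lemma hsym_zero {k : ℕ} (v : Fin k → R) : hsym 0 v = 1 := by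
  rw [hsym, Finset.filter_true_of_mem (fun f _ => fun a b _ => a.elim0)]
  simp

lemma hsym_empty (m : ℕ) (v : Fin 0 → R) : hsym (m + 1) v = 0 := by
  rw [hsym, Finset.univ_eq_empty, Finset.filter_empty, Finset.sum_empty]

lemma hsym_snoc {k m : ℕ} (w : Fin k → R) (y : R) :
    hsym (m + 1) (Fin.snoc w y) = hsym (m + 1) w + y * hsym m (Fin.snoc w y) := by
  classical
  have hA : ∑ f ∈ ((Finset.univ : Finset (Fin (m+1) → Fin (k+1))).filter
        (fun f => ∀ a b, a ≤ b → f a ≤ f b)).filter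
        (fun f => f (Fin.last m) = Fin.last k),
      ∏ i, (Fin.snoc w y : Fin (k+1) → R) (f i) = y * hsym m (Fin.snoc w y) := by
    rw [hsym, Finset.mul_sum]
    refine Finset.sum_nbij' (i := fun f (j : Fin m) => f (Fin.castSucc j))
      (j := fun g => Fin.snoc g (Fin.last k)) ?_ ?_ ?_ ?_ ?_
    · intro f hf
      simp only [Finset.mem_filter, Finset.mem_univ, true_and] at hf ⊢
      exact fun a b hab => hf.1 _ _ (Fin.castSucc_le_castSucc_iff.2 hab)
    · intro g hg
      simp only [Finset.mem_filter, Finset.mem_univ, true_and] at hg ⊢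
      constructor
      · intro a b hab
        rcases Fin.eq_castSucc_or_eq_last b with ⟨jb, rfl⟩ | rfl
        · rcases Fin.eq_castSucc_or_eq_last a with ⟨ja, rfl⟩ | rfl
          · simp only [Fin.snoc_castSucc]
            exact hg _ _ (Fin.castSucc_le_castSucc_iff.1 hab)
          · exact absurd (le_antisymm hab (Fin.le_last _))
              (Fin.castSucc_lt_last jb).ne'
        · simp only [Fin.snoc_last]
          exact Fin.le_last _
      · exact Fin.snoc_last _ _
    · intro f hf
      simp only [Finset.mem_filter] at hf
      funext a
      rcases Fin.eq_castSucc_or_eq_last a with ⟨j, rfl⟩ | rfl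
      · simp only [Fin.snoc_castSucc]
      · simp only [Fin.snoc_last, hf.2]
    · intro g hg
      funext j
      exact Fin.snoc_castSucc (α := fun _ => Fin (k+1)) (x := Fin.last k) (p := g) (i := j)
    · intro f hf
      simp only [Finset.mem_filter] at hf
      rw [Fin.prod_univ_castSucc]
      rw [hf.2, Fin.snoc_last, mul_comm]
  have hB : ∑ f ∈ ((Finset.univ : Finset (Fin (m+1) → Fin (k+1))).filter
        (fun f => ∀ a b, a ≤ b → f a ≤ f b)).filter
        (fun f => ¬ f (Fin.last m) = Fin.last k),
      ∏ i, (Fin.snoc w y : Fin (k+1) → R) (f i) = hsym (m + 1) w := by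
    rw [hsym]
    refine (Finset.sum_bij (i := fun (g : Fin (m+1) → Fin k) _ => Fin.castSucc ∘ g)
      ?_ ?_ ?_ ?_).symm
    · intro g hg
      simp only [Finset.mem_filter, Finset.mem_univ, true_and] at hg ⊢
      refine ⟨fun a b hab => Fin.castSucc_le_castSucc_iff.2 (hg _ _ hab), ?_⟩
      simp only [Function.comp_apply]
      exact (Fin.castSucc_lt_last _).ne
    · intro g₁ h₁ g₂ h₂ he
      funext a
      have := congrFun he a
      simpa only [Function.comp_apply, Fin.castSucc_inj] using this
    · intro f hf
      simp only [Finset.mem_filter, Finset.mem_univ, true_and] at hf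
      have hlt : ∀ a, f a < Fin.last k := by
        intro a
        refine lt_of_le_of_lt (hf.1 a (Fin.last m) (Fin.le_last a)) ?_
        exact lt_of_le_of_ne (Fin.le_last _) hf.2
      refine ⟨fun a => (f a).castPred (hlt a).ne, ?_, ?_⟩
      · simp only [Finset.mem_filter, Finset.mem_univ, true_and]
        intro a b hab
        exact Fin.castPred_le_castPred_iff.2 (hf.1 a b hab)
      · funext a
        simp only [Function.comp_apply, Fin.castSucc_castPred]
    · intro g hg
      refine Finset.prod_congr rfl fun i _ => ?_
      simp only [Function.comp_apply]
      exact (Fin.snoc_castSucc (α := fun _ => R) (x := y) (p := w) (i := g i)).symm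
  rw [hsym, ← Finset.sum_filter_add_sum_filter_not _
    (fun f : Fin (m+1) → Fin (k+1) => f (Fin.last m) = Fin.last k), hA, hB, add_comm]

lemma comp_sort_self {q k : ℕ} {f : Fin q → Fin k} (hf : Monotone f) :
    f ∘ Tuple.sort f = f := by
  have h := Tuple.unique_monotone (f := f) (σ := Tuple.sort f) (τ := Equiv.refl _)
    (Tuple.monotone_sort f) (by simpa using hf)
  simpa using h

lemma hsym_comp {k M : ℕ} (v : Fin k → R) (σ : Equiv.Perm (Fin k)) :
    hsym M (v ∘ σ) = hsym M v := by
  classical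
  rw [hsym, hsym]
  refine Finset.sum_nbij' (i := fun f : Fin M → Fin k => (⇑σ ∘ f) ∘ Tuple.sort (⇑σ ∘ f))
    (j := fun g : Fin M → Fin k => (⇑σ⁻¹ ∘ g) ∘ Tuple.sort (⇑σ⁻¹ ∘ g)) ?_ ?_ ?_ ?_ ?_
  · intro f hf
    simp only [Finset.mem_filter, Finset.mem_univ, true_and]
    exact fun a b hab => Tuple.monotone_sort (⇑σ ∘ f) hab
  · intro g hg
    simp only [Finset.mem_filter, Finset.mem_univ, true_and]
    exact fun a b hab => Tuple.monotone_sort (⇑σ⁻¹ ∘ g) hab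
  · intro f hf
    simp only [Finset.mem_filter, Finset.mem_univ, true_and] at hf
    have h1 : (⇑σ⁻¹ ∘ ((⇑σ ∘ f) ∘ Tuple.sort (⇑σ ∘ f))) = f ∘ Tuple.sort (⇑σ ∘ f) := by
      funext a; simp
    show (⇑σ⁻¹ ∘ ((⇑σ ∘ f) ∘ Tuple.sort (⇑σ ∘ f))) ∘
        Tuple.sort (⇑σ⁻¹ ∘ ((⇑σ ∘ f) ∘ Tuple.sort (⇑σ ∘ f))) = f
    rw [h1, Tuple.comp_perm_comp_sort_eq_comp_sort]
    exact comp_sort_self (fun a b hab => hf a b hab)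
  · intro g hg
    simp only [Finset.mem_filter, Finset.mem_univ, true_and] at hg
    have h1 : (⇑σ ∘ ((⇑σ⁻¹ ∘ g) ∘ Tuple.sort (⇑σ⁻¹ ∘ g))) = g ∘ Tuple.sort (⇑σ⁻¹ ∘ g) := by
      funext a; simp
    show (⇑σ ∘ ((⇑σ⁻¹ ∘ g) ∘ Tuple.sort (⇑σ⁻¹ ∘ g))) ∘
        Tuple.sort (⇑σ ∘ ((⇑σ⁻¹ ∘ g) ∘ Tuple.sort (⇑σ⁻¹ ∘ g))) = g
    rw [h1, Tuple.comp_perm_comp_sort_eq_comp_sort]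
    exact comp_sort_self (fun a b hab => hg a b hab)
  · intro f hf
    have := Equiv.prod_comp (Tuple.sort (⇑σ ∘ f)) (fun i => v (σ (f i)))
    simpa [Function.comp] using this.symm


lemma hsym_one (M : ℕ) (u : Fin 1 → R) : hsym M u = (u 0) ^ M := by
  have hu : u = Fin.snoc (Fin.elim0) (u 0) := by
    funext a
    have ha : a = 0 := Fin.fin_one_eq_zero a
    subst ha
    simp [Fin.snoc]
  induction M with
  | zero => rw [hsym_zero, pow_zero]
  | succ M ih =>
    rw [hu, hsym_snoc, hsym_empty, ← hu, ih, zero_add, pow_succ, mul_comm]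
/-- `h_{M-s}` with the convention that it vanishes for `s > M`. -/
def Tf (M : ℕ) {q : ℕ} (u : Fin q → R) (s : ℕ) : R :=
  if s ≤ M then hsym (M - s) u else 0

/-- shifted elementary symmetric polynomial: `esym' v 0 = 0`, `esym' v (s+1) = esym s v`. -/
def esym' {k : ℕ} (w : Fin k → R) : ℕ → R
  | 0 => 0
  | s + 1 => esym s w

@[simp] lemma esym'_zero {k : ℕ} (w : Fin k → R) : esym' w 0 = 0 := rfl

@[simp] lemma esym'_succ {k : ℕ} (w : Fin k → R) (s : ℕ) : esym' w (s + 1) = esym s w := rfl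

lemma Tf_snoc (M : ℕ) {q : ℕ} (u : Fin q → R) (y : R) (s : ℕ) :
    Tf M (Fin.snoc u y) s = Tf M u s + y * Tf M (Fin.snoc u y) (s + 1) := by
  rcases lt_trichotomy s M with h | rfl | h
  · obtain ⟨d, hd⟩ : ∃ d, M - s = d + 1 := ⟨M - s - 1, by omega⟩
    have hd' : M - (s + 1) = d := by omega
    rw [Tf, Tf, Tf, if_pos h.le, if_pos h.le, if_pos (by omega), hd, hd', hsym_snoc]
  · rw [Tf, Tf, Tf, if_pos le_rfl, if_pos le_rfl, if_neg (by omega), Nat.sub_self,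
      hsym_zero, hsym_zero, mul_zero, add_zero]
  · rw [Tf, Tf, Tf, if_neg (by omega), if_neg (by omega), if_neg (by omega),
      mul_zero, add_zero]

lemma esym_snoc' {k : ℕ} (s : ℕ) (w : Fin k → R) (y : R) :
    esym s (Fin.snoc w y) = esym s w + y * esym' w s := by
  cases s with
  | zero => rw [esym_zero, esym_zero, esym', mul_zero, add_zero]
  | succ s => rw [esym_snoc, esym']

lemma key : ∀ (k : ℕ) (v : Fin k → R) (z : R) (M : ℕ),
    ∑ s ∈ Finset.range (k + 1), (-1 : R) ^ s * esym s v * Tf M (Fin.cons z v) s = z ^ M := by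
  intro k
  induction k with
  | zero =>
    intro v z M
    rw [Finset.sum_range_one, esym_zero, Tf, if_pos (Nat.zero_le M), Nat.sub_zero,
      hsym_one, Fin.cons_zero]
    ring
  | succ k ih =>
    have main : ∀ (w : Fin k → R) (y : R) (z : R) (M : ℕ),
        ∑ s ∈ Finset.range (k + 2),
          (-1 : R) ^ s * esym s (Fin.snoc w y) * Tf M (Fin.cons z (Fin.snoc w y)) s = z ^ M := by
      intro w y z M
      have hcs : (Fin.cons z (Fin.snoc w y) : Fin (k+2) → R)
          = (Fin.snoc (Fin.cons z w) y : Fin (k+2) → R) := by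
        funext a
        rcases Fin.eq_castSucc_or_eq_last a with ⟨j, rfl⟩ | rfl
        · rw [Fin.snoc_castSucc (α := fun _ => R) (x := y) (p := Fin.cons z w) (i := j)]
          rcases Fin.eq_zero_or_eq_succ j with rfl | ⟨i, rfl⟩
          · rw [Fin.castSucc_zero, Fin.cons_zero, Fin.cons_zero]
          · rw [show Fin.castSucc i.succ = Fin.succ (Fin.castSucc i) from rfl,
              Fin.cons_succ, Fin.cons_succ,
              Fin.snoc_castSucc (α := fun _ => R) (x := y) (p := w) (i := i)]
        · rw [Fin.snoc_last, show Fin.last (k+1) = Fin.succ (Fin.last k) from rfl,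
            Fin.cons_succ, Fin.snoc_last]
      rw [hcs]
      set F : ℕ → R := fun s =>
        (-1 : R) ^ s * (y * (esym' w s * Tf M (Fin.snoc (Fin.cons z w) y) s)) with hF
      have hstep : ∀ s ∈ Finset.range (k + 2),
          (-1 : R) ^ s * esym s (Fin.snoc w y) * Tf M (Fin.snoc (Fin.cons z w) y) s
          = (-1 : R) ^ s * esym s w * Tf M (Fin.cons z w) s + (F s - F (s + 1)) := by
        intro s _
        simp only [hF, esym'_succ]
        rw [esym_snoc', Tf_snoc M (Fin.cons z w) y s]
        ring
      rw [Finset.sum_congr rfl hstep, Finset.sum_add_distrib, Finset.sum_range_sub']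
      have hF0 : F 0 = 0 := by simp [hF, esym']
      have hFend : F (k + 2) = 0 := by
        simp only [hF, esym']
        rw [esym_gt w (Nat.lt_succ_self k)]
        ring
      rw [hF0, hFend, sub_zero, add_zero]
      rw [Finset.sum_range_succ, esym_gt w (Nat.lt_succ_self k)]
      rw [ih w z M]
      ring
    intro v z M
    have hv : v = Fin.snoc (Fin.init v) (v (Fin.last k)) := (Fin.snoc_init_self v).symm
    rw [hv]
    exact main _ _ z M

/-- moving one variable to the front does not change `hsym`. -/
lemma hsym_cons_succAbove {m : ℕ} (v : Fin (m + 1) → R) (p : Fin (m + 1)) (M : ℕ) :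
    hsym M (Fin.cons (v p) (v ∘ p.succAbove)) = hsym M v := by
  have hg : Function.Injective (Fin.cons p (⇑p.succAboveOrderEmb) : Fin (m + 1) → Fin (m + 1)) := by
    intro a b hab
    rcases Fin.eq_zero_or_eq_succ a with rfl | ⟨i, rfl⟩ <;>
      rcases Fin.eq_zero_or_eq_succ b with rfl | ⟨j, rfl⟩
    · rfl
    · rw [Fin.cons_zero, Fin.cons_succ] at hab
      exact absurd hab.symm (Fin.succAbove_ne p j)
    · rw [Fin.cons_zero, Fin.cons_succ] at hab
      exact absurd hab (Fin.succAbove_ne p i)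
    · rw [Fin.cons_succ, Fin.cons_succ] at hab
      rw [Fin.succAbove_right_injective (p := p) hab]
  let σ : Equiv.Perm (Fin (m + 1)) :=
    Equiv.ofBijective _ (Finite.injective_iff_bijective.mp hg)
  have hco : v ∘ ⇑σ = Fin.cons (v p) (v ∘ p.succAbove) := by
    funext a
    show v ((Fin.cons p (⇑p.succAboveOrderEmb) : Fin (m + 1) → Fin (m + 1)) a) = _
    rcases Fin.eq_zero_or_eq_succ a with rfl | ⟨i, rfl⟩
    · rw [Fin.cons_zero, Fin.cons_zero]
    · rw [Fin.cons_succ, Fin.cons_succ]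
      rfl
  rw [← hco, hsym_comp]


lemma keyApp {m : ℕ} (x : Fin (m + 1) → R) (p : Fin (m + 1)) (M : ℕ) :
    ∑ i : Fin (m + 1), (if (i : ℕ) ≤ M then hsym (M - (i : ℕ)) x else 0) *
      ((-1 : R) ^ (i : ℕ) * esym (i : ℕ) (x ∘ p.succAbove)) = x p ^ M := by
  rw [Fin.sum_univ_eq_sum_range (fun s => (if s ≤ M then hsym (M - s) x else 0) *
    ((-1 : R) ^ s * esym s (x ∘ p.succAbove)))]
  rw [← key m (x ∘ p.succAbove) (x p) M]
  refine Finset.sum_congr rfl fun s _ => ?_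
  rw [Tf]
  rcases le_or_gt s M with h | h
  · rw [if_pos h, if_pos h, hsym_cons_succAbove]
    ring
  · rw [if_neg (by omega), if_neg (by omega)]
    ring

lemma core {D : Type*} [CommRing D] [IsDomain D] {m : ℕ} (x : Fin (m + 1) → D)
    (hx : Function.Injective x) :
    Matrix.det (Matrix.of fun i j : Fin (m + 1) =>
      if (i : ℕ) ≤ 2 * (j : ℕ) then hsym (2 * (j : ℕ) - (i : ℕ)) x else 0) =
    ∏ i, ∏ j ∈ Finset.Ioi i, (x j + x i) := by
  classical
  set M : Matrix (Fin (m+1)) (Fin (m+1)) D := Matrix.of fun i j : Fin (m + 1) =>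
      if (i : ℕ) ≤ 2 * (j : ℕ) then hsym (2 * (j : ℕ) - (i : ℕ)) x else 0 with hM
  set E : Matrix (Fin (m+1)) (Fin (m+1)) D := Matrix.of fun i p : Fin (m + 1) =>
      (-1 : D) ^ (i : ℕ) * esym (i : ℕ) (x ∘ p.succAbove) with hE
  set N : Matrix (Fin (m+1)) (Fin (m+1)) D := Matrix.of fun i j : Fin (m + 1) =>
      if (i : ℕ) ≤ (j : ℕ) then hsym ((j : ℕ) - (i : ℕ)) x else 0 with hN
  have hME : M.transpose * E = Matrix.of (fun j p : Fin (m+1) => x p ^ (2 * (j : ℕ))) := by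
    ext j p
    rw [Matrix.mul_apply]
    simp only [hM, hE, Matrix.transpose_apply, Matrix.of_apply]
    exact keyApp x p (2 * (j : ℕ))
  have hNE : N.transpose * E = Matrix.of (fun j p : Fin (m+1) => x p ^ (j : ℕ)) := by
    ext j p
    rw [Matrix.mul_apply]
    simp only [hN, hE, Matrix.transpose_apply, Matrix.of_apply]
    exact keyApp x p (j : ℕ)
  have hdetN : N.det = 1 := by
    have htri : N.BlockTriangular id := by
      intro i j hij
      rw [hN]
      simp only [Matrix.of_apply]
      rw [if_neg (by exact_mod_cast Nat.not_le.2 hij)]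
    rw [Matrix.det_of_upperTriangular htri]
    refine Finset.prod_eq_one fun i _ => ?_
    rw [hN]
    simp only [Matrix.of_apply]
    rw [if_pos le_rfl, Nat.sub_self, hsym_zero]
  have hd1 : (Matrix.of (fun j p : Fin (m+1) => x p ^ (j : ℕ))).det =
      ∏ i, ∏ j ∈ Finset.Ioi i, (x j - x i) := by
    have : (Matrix.of (fun j p : Fin (m+1) => x p ^ (j : ℕ))) = (Matrix.vandermonde x).transpose := by
      ext j p
      simp [Matrix.vandermonde]
    rw [this, Matrix.det_transpose, Matrix.det_vandermonde]
  have hd2 : (Matrix.of (fun j p : Fin (m+1) => x p ^ (2 * (j : ℕ)))).det =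
      ∏ i, ∏ j ∈ Finset.Ioi i, (x j ^ 2 - x i ^ 2) := by
    have : (Matrix.of (fun j p : Fin (m+1) => x p ^ (2 * (j : ℕ))))
        = (Matrix.vandermonde (fun p => x p ^ 2)).transpose := by
      ext j p
      simp [Matrix.vandermonde, pow_mul]
    rw [this, Matrix.det_transpose, Matrix.det_vandermonde]
  have hdetE : E.det = ∏ i, ∏ j ∈ Finset.Ioi i, (x j - x i) := by
    have := congrArg Matrix.det hNE
    rw [Matrix.det_mul, Matrix.det_transpose, hdetN, one_mul, hd1] at this
    exact this
  have hVne : (∏ i, ∏ j ∈ Finset.Ioi i, (x j - x i)) ≠ 0 := by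
    refine Finset.prod_ne_zero_iff.2 fun i _ => Finset.prod_ne_zero_iff.2 fun j hj => ?_
    have : x j ≠ x i := fun h => (Finset.mem_Ioi.1 hj).ne' (hx h)
    exact sub_ne_zero_of_ne this
  have hmain : M.det * (∏ i, ∏ j ∈ Finset.Ioi i, (x j - x i))
      = (∏ i, ∏ j ∈ Finset.Ioi i, (x j + x i)) * (∏ i, ∏ j ∈ Finset.Ioi i, (x j - x i)) := by
    have h1 : M.det * E.det = ∏ i, ∏ j ∈ Finset.Ioi i, (x j ^ 2 - x i ^ 2) := by
      rw [← Matrix.det_transpose M, ← Matrix.det_mul, hME, hd2]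
    have hpm : (∏ i, ∏ j ∈ Finset.Ioi i, (x j + x i)) *
        (∏ i, ∏ j ∈ Finset.Ioi i, (x j - x i))
        = ∏ i, ∏ j ∈ Finset.Ioi i, (x j ^ 2 - x i ^ 2) := by
      rw [← Finset.prod_mul_distrib]
      refine Finset.prod_congr rfl fun i _ => ?_
      rw [← Finset.prod_mul_distrib]
      refine Finset.prod_congr rfl fun j _ => ?_
      ring
    calc M.det * (∏ i, ∏ j ∈ Finset.Ioi i, (x j - x i))
        = M.det * E.det := by rw [hdetE]
      _ = ∏ i, ∏ j ∈ Finset.Ioi i, (x j ^ 2 - x i ^ 2) := h1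
      _ = (∏ i, ∏ j ∈ Finset.Ioi i, (x j + x i)) *
          (∏ i, ∏ j ∈ Finset.Ioi i, (x j - x i)) := hpm.symm
  exact mul_right_cancel₀ hVne hmain


lemma prod_pairs {n : ℕ} (g : Fin n → Fin n → R) :
    ∏ p ∈ Finset.univ.filter (fun p : Fin n × Fin n => p.1 < p.2), g p.1 p.2
    = ∏ i, ∏ j ∈ Finset.Ioi i, g i j := by
  classical
  rw [Finset.prod_sigma']
  refine (Finset.prod_nbij' (i := fun a : (_ : Fin n) × Fin n => (a.1, a.2))
    (j := fun p : Fin n × Fin n => ⟨p.1, p.2⟩) ?_ ?_ ?_ ?_ ?_).symm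
  · intro a ha
    rw [Finset.mem_sigma] at ha
    simp only [Finset.mem_filter, Finset.mem_univ, true_and]
    exact Finset.mem_Ioi.1 ha.2
  · intro p hp
    rw [Finset.mem_sigma]
    simp only [Finset.mem_filter, Finset.mem_univ, true_and] at hp
    exact ⟨Finset.mem_univ _, Finset.mem_Ioi.2 hp⟩
  · intro a _; rfl
  · intro p _; rfl
  · intro a _; rfl

lemma aeval_hsym {q M : ℕ} (x : Fin q → R) :
    MvPolynomial.aeval x (hsym M (MvPolynomial.X : Fin q → MvPolynomial (Fin q) ℤ)) = hsym M x := by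
  rw [hsym, map_sum, hsym]
  refine Finset.sum_congr rfl fun f _ => ?_
  rw [map_prod]
  exact Finset.prod_congr rfl fun i _ => MvPolynomial.aeval_X _ _

end Staircase

/-- Evaluation of the staircase Schur polynomial as a product, via Jacobi–Trudi:
`det_{0 ≤ i,j ≤ n−1} ( h_{2j−i}(x_1,…,x_n) ) = ∏_{1 ≤ i < j ≤ n} (x_i + x_j)`,
with the convention `h_m = 0` for `m < 0`. -/
theorem staircase_schur_det {R : Type*} [CommRing R] (n : ℕ) (hn : 1 ≤ n) (x : Fin n → R) :
    Matrix.det (Matrix.of fun i j : Fin n =>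
      if (i : ℕ) ≤ 2 * (j : ℕ) then hsym (2 * (j : ℕ) - (i : ℕ)) x else 0) =
    ∏ p ∈ Finset.univ.filter (fun p : Fin n × Fin n => p.1 < p.2), (x p.1 + x p.2) := by
  obtain ⟨m, rfl⟩ : ∃ m, n = m + 1 := ⟨n - 1, by omega⟩
  classical
  have hcore := Staircase.core (MvPolynomial.X : Fin (m+1) → MvPolynomial (Fin (m+1)) ℤ)
    MvPolynomial.X_injective
  have h1 : Matrix.det (Matrix.of fun i j : Fin (m+1) =>
      if (i : ℕ) ≤ 2 * (j : ℕ) then hsym (2 * (j : ℕ) - (i : ℕ)) x else 0)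
      = MvPolynomial.aeval x (Matrix.det (Matrix.of fun i j : Fin (m+1) =>
        if (i : ℕ) ≤ 2 * (j : ℕ) then
          hsym (2 * (j : ℕ) - (i : ℕ)) (MvPolynomial.X : Fin (m+1) → MvPolynomial (Fin (m+1)) ℤ)
        else 0)) := by
    rw [AlgHom.map_det]
    congr 1
    ext i j
    simp only [AlgHom.mapMatrix_apply, Matrix.map_apply, Matrix.of_apply]
    split_ifs
    · exact (Staircase.aeval_hsym x).symm
    · exact (map_zero _).symm
  rw [Staircase.prod_pairs (fun i j => x i + x j), h1, hcore]
  rw [map_prod]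
  refine Finset.prod_congr rfl fun i _ => ?_
  rw [map_prod]
  refine Finset.prod_congr rfl fun j _ => ?_
  rw [map_add, MvPolynomial.aeval_X, MvPolynomial.aeval_X, add_comm]
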